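/- In mZ_n, the formula ¬¬(A ∧ B) ⇒ (¬¬A ∧ ¬¬B) is derivable. -/
import Mathlib


inductive Fm where
  | var : Nat → Fm
  | bot : Fm
  | top : Fm
  | neg : Fm → Fm
  | and : Fm → Fm → Fm
  | or  : Fm → Fm → Fm
  | imp : Fm → Fm → Fm
deriving DecidableEq

open Fm

/-- Axioms (1)-(8) of positive intuitionistic propositional calculus IPC⁺. -/
def PosAx (f : Fm) : Prop := ∃ A B C,
  f = imp A (imp B A) ∨
  f = imp (imp A B) (imp (imp A (imp B C)) (imp A C)) ∨
  f = imp A (imp B (Fm.and A B)) ∨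
  f = imp (Fm.and A B) A ∨
  f = imp (Fm.and A B) B ∨
  f = imp A (Fm.or A B) ∨
  f = imp B (Fm.or A B) ∨
  f = imp (imp A C) (imp (imp B C) (imp (Fm.or A B) C))

/-- Axiom (9b): contraposition. -/
def Ax9b (f : Fm) : Prop := ∃ A B, f = imp (imp A B) (imp (neg B) (neg A))

/-- Axiom (10b)': 1 ⇒ ¬0. -/
def Ax10b' (f : Fm) : Prop := f = imp Fm.top (neg Fm.bot)

/-- Axiom (11b): A ⇒ 1 and 0 ⇒ A. -/
def Ax11b (f : Fm) : Prop := ∃ A, f = imp A Fm.top ∨ f = imp Fm.bot A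

/-- Axiom (12b): (¬A ∧ ¬B) ⇒ ¬(A ∨ B). -/
def Ax12b (f : Fm) : Prop := ∃ A B, f = imp (Fm.and (neg A) (neg B)) (neg (Fm.or A B))

/-- Axiom (13b): ¬(A ∧ B) ⇒ (¬A ∨ ¬B). -/
def Ax13b (f : Fm) : Prop := ∃ A B, f = imp (neg (Fm.and A B)) (Fm.or (neg A) (neg B))

/-- Axioms of the system mZ_n. -/
def MZAx (f : Fm) : Prop := PosAx f ∨ Ax9b f ∨ Ax10b' f ∨ Ax11b f ∨ Ax12b f

/-- Axioms of the system mCZ_n. -/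
def MCZAx (f : Fm) : Prop := MZAx f ∨ Ax13b f

/-- Hilbert-style derivability from hypotheses H with axiom set Ax; Modus Ponens only rule. -/
inductive Deriv (Ax : Fm → Prop) (H : Set Fm) : Fm → Prop
  | ax  {f : Fm} : Ax f → Deriv Ax H f
  | hyp {f : Fm} : f ∈ H → Deriv Ax H f
  | mp  {A B : Fm} : Deriv Ax H (imp A B) → Deriv Ax H A → Deriv Ax H B

/-- A° = ¬(A ∧ ¬A). -/
def circ (A : Fm) : Fm := neg (Fm.and A (neg A))

/-- Aⁿ : n-fold application of °, A⁰ = A. -/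
def pow (A : Fm) : Nat → Fm
  | 0 => A
  | n + 1 => circ (pow A n)

/-- A^{(n)} = A¹ ∧ A² ∧ … ∧ Aⁿ (for n ≥ 1; conventionally ⊤ for n = 0). -/
def conN (A : Fm) : Nat → Fm
  | 0 => Fm.top
  | 1 => pow A 1
  | n + 2 => Fm.and (conN A (n + 1)) (pow A (n + 2))

namespace MZHelp

abbrev D (f : Fm) : Prop := Deriv MZAx ∅ f

lemma ax1 (A B : Fm) : D (imp A (imp B A)) :=
  Deriv.ax (Or.inl ⟨A, B, A, Or.inl rfl⟩)

lemma ax2 (A B C : Fm) : D (imp (imp A B) (imp (imp A (imp B C)) (imp A C))) :=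
  Deriv.ax (Or.inl ⟨A, B, C, Or.inr (Or.inl rfl)⟩)

lemma ax3 (A B : Fm) : D (imp A (imp B (Fm.and A B))) :=
  Deriv.ax (Or.inl ⟨A, B, A, Or.inr (Or.inr (Or.inl rfl))⟩)

lemma ax4 (A B : Fm) : D (imp (Fm.and A B) A) :=
  Deriv.ax (Or.inl ⟨A, B, A, Or.inr (Or.inr (Or.inr (Or.inl rfl)))⟩)

lemma ax5 (A B : Fm) : D (imp (Fm.and A B) B) :=
  Deriv.ax (Or.inl ⟨A, B, A, Or.inr (Or.inr (Or.inr (Or.inr (Or.inl rfl))))⟩)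

lemma contrap {A B : Fm} (h : D (imp A B)) : D (imp (neg B) (neg A)) :=
  Deriv.mp (Deriv.ax (Or.inr (Or.inl ⟨A, B, rfl⟩))) h

lemma comp {A B C : Fm} (h1 : D (imp A B)) (h2 : D (imp B C)) : D (imp A C) :=
  Deriv.mp (Deriv.mp (ax2 A B C) h1) (Deriv.mp (ax1 (imp B C) A) h2)

lemma pair {X Y Z : Fm} (h1 : D (imp X Y)) (h2 : D (imp X Z)) :
    D (imp X (Fm.and Y Z)) :=
  Deriv.mp (Deriv.mp (ax2 X Z (Fm.and Y Z)) h2) (comp h1 (ax3 Y Z))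

end MZHelp

open MZHelp in
theorem stmt5 (A B : Fm) :
    Deriv MZAx ∅ (imp (neg (neg (Fm.and A B))) (Fm.and (neg (neg A)) (neg (neg B)))) :=
  pair (contrap (contrap (ax4 A B))) (contrap (contrap (ax5 A B)))
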